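/- arXiv:1805.00454 — 2 statements merged into one kernel-verified Lean document; each statement's English description precedes it below -/
import Mathlib

section
/- Let f : ℝ^d → ℝ^d∪{∞} be a function and define the Julia set J(f) as the union of the closure of O⁻_f(∞) with the set of points x outside this closure such that every neighbourhood U_x of x contained in the complement of the closure of O⁻_f(∞) has forward orbit with finite complement. If O⁻_f(∞) is infinite, then J(f) equals the closure of O⁻_f(∞). -/
open Filter Topology OnePoint

/-
The backward orbit `B` of `∞` is backward invariant, so no forward iterate of a point outside `B`
lands in `B`. Hence the forward orbit of any neighbourhood avoiding `closure B` misses all of the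
infinite set `B`, and no point outside `closure B` can satisfy the defining condition of `J(f)`.
-/

namespace Function

variable {α : Type*} (F : α → α) (a : α)

theorem iterate_preimage_iUnion_iterate_preimage_subset (k : ℕ) :
    F^[k] ⁻¹' (⋃ m : ℕ, F^[m] ⁻¹' {a}) ⊆ ⋃ m : ℕ, F^[m] ⁻¹' {a} := by
  intro x hx
  obtain ⟨m, hm⟩ := Set.mem_iUnion.1 hx
  exact Set.mem_iUnion.2 ⟨m + k, by simpa [iterate_add_apply] using hm⟩

theorem iUnion_iterate_preimage_subset_compl_iUnion_iterate_image {U : Set α}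
    (hU : U ⊆ (⋃ m : ℕ, F^[m] ⁻¹' {a})ᶜ) :
    ⋃ m : ℕ, F^[m] ⁻¹' {a} ⊆ (⋃ k : ℕ, F^[k] '' U)ᶜ := by
  rintro y hy ⟨_, ⟨k, rfl⟩, u, hu, rfl⟩
  exact hU hu (iterate_preimage_iUnion_iterate_preimage_subset F a k hy)

end Function

theorem stmt1_general {d : ℕ}
    (F : OnePoint (EuclideanSpace ℝ (Fin d)) → OnePoint (EuclideanSpace ℝ (Fin d)))
    (hBw : (⋃ m : ℕ, F^[m] ⁻¹' {∞}).Infinite) :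
    ({x | x ∉ closure (⋃ m : ℕ, F^[m] ⁻¹' {∞}) ∧
        ∀ U ∈ 𝓝 x, U ⊆ (closure (⋃ m : ℕ, F^[m] ⁻¹' {∞}))ᶜ →
          ((⋃ m : ℕ, F^[m] '' U)ᶜ).Finite}
      ∪ closure (⋃ m : ℕ, F^[m] ⁻¹' {∞}))
      = closure (⋃ m : ℕ, F^[m] ⁻¹' {∞}) := by
  set B := ⋃ m : ℕ, F^[m] ⁻¹' {∞}
  refine Set.union_eq_self_of_subset_left fun x ⟨hx, hJ⟩ => absurd ?_ hBw
  have hU : (closure B)ᶜ ∈ 𝓝 x := isClosed_closure.isOpen_compl.mem_nhds hx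
  refine (hJ _ hU subset_rfl).subset ?_
  exact Function.iUnion_iterate_preimage_subset_compl_iUnion_iterate_image F ∞
    (Set.compl_subset_compl.2 subset_closure)

theorem stmt1 {d : ℕ}
    (f : EuclideanSpace ℝ (Fin d) → OnePoint (EuclideanSpace ℝ (Fin d)))
    (F : OnePoint (EuclideanSpace ℝ (Fin d)) → OnePoint (EuclideanSpace ℝ (Fin d)))
    (hFinfty : F ∞ = ∞) (hFf : ∀ z : EuclideanSpace ℝ (Fin d), F ↑z = f z)
    (hBw : (⋃ m : ℕ, F^[m] ⁻¹' {∞}).Infinite) :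
    ({x | x ∉ closure (⋃ m : ℕ, F^[m] ⁻¹' {∞}) ∧
        ∀ U ∈ 𝓝 x, U ⊆ (closure (⋃ m : ℕ, F^[m] ⁻¹' {∞}))ᶜ →
          ((⋃ m : ℕ, F^[m] '' U)ᶜ).Finite}
      ∪ closure (⋃ m : ℕ, F^[m] ⁻¹' {∞}))
      = closure (⋃ m : ℕ, F^[m] ⁻¹' {∞}) :=
  stmt1_general F hBw
end

section
/- Combining forward and backward invariance: let f : D → X be a continuous open map on an open D ⊆ X, ∞ ∈ X, J = closure(⋃_{m≥0} f^{-m}(∞)). Then for x ∈ D: x ∈ J \ {∞} if and only if f(x) ∈ J. -/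
open Filter Topology

/-
Write `J` for the closure of the backward orbit `A = ⋃ m, f^[m] ⁻¹' {∞}`. The set `A` satisfies
`f ⁻¹' A ⊆ A` and `f '' (A \ {∞}) ⊆ A`. Forward invariance: near a point `x ∈ D ∩ J` the set `A`
is approximated inside the open set `D`, which misses `∞`, so continuity carries `x` into `J`.
Backward invariance: since `f` is open on `D`, the image of a neighbourhood of `x` inside `D` is a
neighbourhood of `f x`, which meets `A`; hence every neighbourhood of `x` meets `f ⁻¹' A ⊆ A`.
-/

section BackwardOrbit

variable {X : Type*} (f : X → X) (a : X)

lemma preimage_iUnion_preimage_iterate_subset :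
    f ⁻¹' (⋃ m : ℕ, f^[m] ⁻¹' {a}) ⊆ ⋃ m : ℕ, f^[m] ⁻¹' {a} := by
  simp only [Set.preimage_iUnion, ← Set.preimage_comp, ← Function.iterate_succ]
  exact Set.iUnion_subset fun m => Set.subset_iUnion_of_subset (m + 1) subset_rfl

lemma mapsTo_iUnion_preimage_iterate_diff :
    Set.MapsTo f ((⋃ m : ℕ, f^[m] ⁻¹' {a}) \ {a}) (⋃ m : ℕ, f^[m] ⁻¹' {a}) := by
  rintro y ⟨hy, hya⟩
  obtain ⟨_ | m, hm⟩ := Set.mem_iUnion.mp hy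
  · exact absurd hm hya
  · exact Set.mem_iUnion.mpr ⟨m, hm⟩

end BackwardOrbit

lemma mem_closure_preimage_of_isOpen_image {X Y : Type*} [TopologicalSpace X]
    [TopologicalSpace Y] {f : X → Y} {D : Set X} (hD : IsOpen D)
    (hopen : ∀ U : Set X, U ⊆ D → IsOpen U → IsOpen (f '' U)) {t : Set Y} {x : X}
    (hxD : x ∈ D) (hfx : f x ∈ closure t) : x ∈ closure (f ⁻¹' t) := by
  refine mem_closure_iff.mpr fun V hV hxV => ?_
  obtain ⟨_, ⟨y, hy, rfl⟩, hyt⟩ := mem_closure_iff.mp hfx _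
    (hopen _ Set.inter_subset_right (hV.inter hD)) ⟨x, ⟨hxV, hxD⟩, rfl⟩
  exact ⟨y, hy.1, hyt⟩

theorem stmt11_general {X : Type*} [TopologicalSpace X] (f : X → X) (D : Set X)
    (hD : IsOpen D) (hc : ContinuousOn f D)
    (hopen : ∀ U : Set X, U ⊆ D → IsOpen U → IsOpen (f '' U)) (infty : X)
    (hinftyD : infty ∉ D)
    (x : X) (hxD : x ∈ D) :
    x ∈ closure (⋃ m : ℕ, f^[m] ⁻¹' {infty}) \ {infty} ↔
      f x ∈ closure (⋃ m : ℕ, f^[m] ⁻¹' {infty}) := by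
  set A := ⋃ m : ℕ, f^[m] ⁻¹' {infty}
  constructor
  · rintro ⟨hxJ, -⟩
    have hDA : D ∩ A ⊆ A \ {infty} := fun y hy => ⟨hy.2, fun h => hinftyD (h ▸ hy.1)⟩
    have hxDA : x ∈ closure (D ∩ A) := hD.inter_closure ⟨hxD, hxJ⟩
    have hfx : ContinuousWithinAt f (D ∩ A) x :=
      (hc.continuousAt (hD.mem_nhds hxD)).continuousWithinAt
    exact hfx.mem_closure hxDA ((mapsTo_iUnion_preimage_iterate_diff f infty).mono_left hDA)
  · intro hfx
    refine ⟨?_, fun h => hinftyD (h ▸ hxD)⟩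
    exact closure_mono (preimage_iUnion_preimage_iterate_subset f infty)
      (mem_closure_preimage_of_isOpen_image hD hopen hxD hfx)

theorem stmt11 {X : Type*} [TopologicalSpace X] [T1Space X] (f : X → X) (D : Set X)
    (hD : IsOpen D) (hc : ContinuousOn f D)
    (hopen : ∀ U : Set X, U ⊆ D → IsOpen U → IsOpen (f '' U)) (infty : X)
    (hinftyD : infty ∉ D)
    (hsub : (⋃ m : ℕ, f^[m] ⁻¹' {infty}) \ {infty} ⊆ D)
    (x : X) (hxD : x ∈ D) :
    x ∈ closure (⋃ m : ℕ, f^[m] ⁻¹' {infty}) \ {infty} ↔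
      f x ∈ closure (⋃ m : ℕ, f^[m] ⁻¹' {infty}) :=
  stmt11_general f D hD hc hopen infty hinftyD x hxD
end
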